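/- arXiv:1711.02576 — 2 statements merged into one kernel-verified Lean document; each statement's English description precedes it below -/
import Mathlib

section
/- Let M = max{|a_k| : 1 ≤ k ≤ n−1}. Suppose n ≥ 3, 1 ≤ c ≤ n−2, |a_0| > 1, |a_{n−1}| = M, and A is a matrix of type E_c(p♯)^{−1}. Then N(F) ≤ N(A), where F is the Frobenius companion matrix of p. -/
noncomputable section

/-- Maximum absolute row sum (the `∞`-norm). -/
def infNorm {n : ℕ} (A : Matrix (Fin n) (Fin n) ℂ) : ℝ :=
  ⨆ i, ∑ j, ‖A i j‖

/-- Maximum absolute column sum (the `1`-norm). -/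
def oneNorm {n : ℕ} (A : Matrix (Fin n) (Fin n) ℂ) : ℝ :=
  ⨆ j, ∑ i, ‖A i j‖

/-- `N(A) = min {‖A‖_∞, ‖A‖_1}`. -/
def NN {n : ℕ} (A : Matrix (Fin n) (Fin n) ℂ) : ℝ :=
  min (infNorm A) (oneNorm A)

/-- The monic polynomial `p(x) = x^n + a_{n-1}x^{n-1} + ⋯ + a_1 x + a_0`. -/
def pPoly (n : ℕ) (a : ℕ → ℂ) : Polynomial ℂ :=
  Polynomial.X ^ n + ∑ k ∈ Finset.range n, Polynomial.C (a k) * Polynomial.X ^ k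

/-- Coefficients of the monic reversal polynomial `p♯`:
`asharp n a k` is the coefficient of `x^k` in `p♯`, namely `1/a_0` for `k = 0`
and `a_{n-k}/a_0` for `1 ≤ k ≤ n-1`. -/
def asharp (n : ℕ) (a : ℕ → ℂ) : ℕ → ℂ :=
  fun k => if k = 0 then 1 / a 0 else a (n - k) / a 0

/-- A unit sparse companion matrix of `p` in Hessenberg form, with explicit data:
`m` (0-based; `m + 1 ≤ n`), and 0-based positions `(r k, c k)` (for `k = 0, …, n-1`)
satisfying `r k - c k = k`, `m ≤ r k ≤ n-1`, `0 ≤ c k ≤ m`; the superdiagonal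
entries are `1`, the entry at `(r k, c k)` is `-a_{n-1-k}`, and all other entries
are `0`.  (This is the 0-based translation of the 1-based description.) -/
def IsUnitSparseData (n m : ℕ) (a : ℕ → ℂ) (C : Matrix (Fin n) (Fin n) ℂ)
    (r c : Fin n → Fin n) : Prop :=
  m + 1 ≤ n ∧
  (∀ k : Fin n, (r k : ℕ) = (c k : ℕ) + (k : ℕ)) ∧
  (∀ k : Fin n, m ≤ (r k : ℕ)) ∧
  (∀ k : Fin n, (c k : ℕ) ≤ m) ∧
  (∀ k : Fin n, C (r k) (c k) = -a (n - 1 - (k : ℕ))) ∧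
  (∀ i j : Fin n, (j : ℕ) = (i : ℕ) + 1 → C i j = 1) ∧
  (∀ i j : Fin n, (j : ℕ) ≠ (i : ℕ) + 1 →
    (∀ k : Fin n, ¬(r k = i ∧ c k = j)) → C i j = 0)

/-- A unit sparse companion matrix of `p` in Hessenberg form. -/
def IsUnitSparse (n : ℕ) (a : ℕ → ℂ) (C : Matrix (Fin n) (Fin n) ℂ) : Prop :=
  ∃ (m : ℕ) (r c : Fin n → Fin n), IsUnitSparseData n m a C r c

/-- A Fiedler companion matrix of `p` in Hessenberg form (with explicit position
data): a unit sparse companion matrix such that for `1 ≤ k ≤ n-1`, if `-a_{k-1}`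
occupies position `(i,j)` then `-a_k` occupies position `(i-1,j)` or `(i,j+1)`.
Here the coefficient `-a_{n-1-k}` sits at position index `k`, so the coefficient
`-a_{k-1}` has index `k' = n-k` and `-a_k` has index `n-1-k = k' - 1`. -/
def IsFiedlerData (n m : ℕ) (a : ℕ → ℂ) (C : Matrix (Fin n) (Fin n) ℂ)
    (r c : Fin n → Fin n) : Prop :=
  IsUnitSparseData n m a C r c ∧
  ∀ k k' : Fin n, (k' : ℕ) = (k : ℕ) + 1 →
    ((r k : ℕ) + 1 = (r k' : ℕ) ∧ c k = c k') ∨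
    (r k = r k' ∧ (c k : ℕ) = (c k' : ℕ) + 1)

/-- The Frobenius companion matrix of the monic polynomial with coefficients `a`
(0-based: superdiagonal `1`'s and last row `-a_0, -a_1, …, -a_{n-1}`). -/
def Frob (n : ℕ) (a : ℕ → ℂ) : Matrix (Fin n) (Fin n) ℂ :=
  Matrix.of fun i j =>
    if (j : ℕ) = (i : ℕ) + 1 then 1
    else if (i : ℕ) = n - 1 then -a (j : ℕ)
    else 0

/-- The Fiedler companion matrix `L_b` (0-based translation): superdiagonal `1`'s,
`(L_b)_{i,b} = -a_{n+b-1-i}` for `b ≤ i ≤ n-2`, and `(L_b)_{n-1,j} = -a_j` for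
`0 ≤ j ≤ b`; all other entries `0`. -/
def Lmat (n b : ℕ) (a : ℕ → ℂ) : Matrix (Fin n) (Fin n) ℂ :=
  Matrix.of fun i j =>
    if (j : ℕ) = (i : ℕ) + 1 then 1
    else if (i : ℕ) = n - 1 ∧ (j : ℕ) ≤ b then -a (j : ℕ)
    else if (j : ℕ) = b ∧ b ≤ (i : ℕ) ∧ (i : ℕ) + 2 ≤ n then -a (n + b - 1 - (i : ℕ))
    else 0

/-- The matrix `W` (0-based translation): `W_{0,0} = -a_{n-1}`, `W_{0,n-1} = -a_0`,
`W_{i,i-1} = 1` for `1 ≤ i ≤ n-1`, `W_{i,0} = a_{i-1}/a_0` for `2 ≤ i ≤ n-1`;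
all other entries `0`. -/
def Wmat (n : ℕ) (a : ℕ → ℂ) : Matrix (Fin n) (Fin n) ℂ :=
  Matrix.of fun i j =>
    if (i : ℕ) = 0 ∧ (j : ℕ) = 0 then -a (n - 1)
    else if (i : ℕ) = 0 ∧ (j : ℕ) = n - 1 then -a 0
    else if (i : ℕ) = (j : ℕ) + 1 then 1
    else if 2 ≤ (i : ℕ) ∧ (j : ℕ) = 0 then a ((i : ℕ) - 1) / a 0
    else 0

/-- The matrix `X_b` (0-based translation): `(X_b)_{0,j} = -a_{n-1-j}` for
`0 ≤ j ≤ n-2-b`, `(X_b)_{0,n-1} = -a_0`, `(X_b)_{i,i-1} = 1` for `1 ≤ i ≤ n-2`,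
`(X_b)_{n-1,n-2} = 1`, `(X_b)_{n-1,j} = a_{n-2-j}/a_0` for `n-2-b ≤ j ≤ n-3`;
all other entries `0`. -/
def Xmat (n b : ℕ) (a : ℕ → ℂ) : Matrix (Fin n) (Fin n) ℂ :=
  Matrix.of fun i j =>
    if (i : ℕ) = 0 ∧ (j : ℕ) + b ≤ n - 2 then -a (n - 1 - (j : ℕ))
    else if (i : ℕ) = 0 ∧ (j : ℕ) = n - 1 then -a 0
    else if (i : ℕ) = (j : ℕ) + 1 ∧ (i : ℕ) + 2 ≤ n then 1
    else if (i : ℕ) = n - 1 ∧ (j : ℕ) = n - 2 then 1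
    else if (i : ℕ) = n - 1 ∧ n - 2 ≤ (j : ℕ) + b ∧ (j : ℕ) + 3 ≤ n then
      a (n - 2 - (j : ℕ)) / a 0
    else 0

/-- A matrix `E` of type `E_c(q)` for the monic polynomial with coefficients `b`
(0-based translation of the 1-based description): superdiagonal `1`'s,
`E_{n-1,0} = -b_0`, and positions `(r k, col k)` for `k = 0, …, n-2` with
`r k = col k + k`, `c ≤ r k`, `1 ≤ col k ≤ c`, holding `-b_{n-1-k}`; all other
entries `0`. -/
def IsTypeE (n c : ℕ) (b : ℕ → ℂ) (E : Matrix (Fin n) (Fin n) ℂ) : Prop :=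
  ∃ r col : ℕ → Fin n,
    (∀ k : ℕ, k ≤ n - 2 → (r k : ℕ) = (col k : ℕ) + k) ∧
    (∀ k : ℕ, k ≤ n - 2 → c ≤ (r k : ℕ)) ∧
    (∀ k : ℕ, k ≤ n - 2 → 1 ≤ (col k : ℕ) ∧ (col k : ℕ) ≤ c) ∧
    (∀ k : ℕ, k ≤ n - 2 → E (r k) (col k) = -b (n - 1 - k)) ∧
    (∀ i j : Fin n, (j : ℕ) = (i : ℕ) + 1 → E i j = 1) ∧
    (∀ i j : Fin n, (i : ℕ) = n - 1 → (j : ℕ) = 0 → E i j = -b 0) ∧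
    (∀ i j : Fin n, (j : ℕ) ≠ (i : ℕ) + 1 → ¬((i : ℕ) = n - 1 ∧ (j : ℕ) = 0) →
      (∀ k : ℕ, k ≤ n - 2 → ¬(r k = i ∧ col k = j)) → E i j = 0)

/-- `A` is of type `E_c(p♯)⁻¹`: `A = E⁻¹` for some `E` of type `E_c(p♯)`. -/
def IsTypeEInv (n c : ℕ) (a : ℕ → ℂ) (A : Matrix (Fin n) (Fin n) ℂ) : Prop :=
  ∃ E : Matrix (Fin n) (Fin n) ℂ, IsTypeE n c (asharp n a) E ∧ A = E⁻¹



/-! Let `A = E⁻¹`, let `b` be the coefficients of `p♯`, and index from `0`. The first `c` rows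
of `E` are the unit rows `e_{i+1}`, so rows `1, …, c` of `A` are `e_0, …, e_{c-1}`; column `0`
of `E` is `-b₀ e_{n-1}`, and the last row of `E` is supported on columns `0, …, c` with entries
`-b₀, -b₁, …`. Reading off `(E A)_{n-1,0} = 0` and `(A E)_{0,0} = 1` gives
`A₀₀ = -b₁/b₀ = -a_{n-1}` and `A_{0,n-1} = -1/b₀ = -a₀`, besides `A₁₀ = 1`. Hence
`‖A‖_∞ ≥ |a₀| + M` and `‖A‖₁ ≥ max (|a₀|, 1 + M)`, while the column sums of `F` are `|a₀|` and
`1 + |a_j| ≤ 1 + M`. Since `|a₀| > 1`, `N(F) ≤ ‖F‖₁ ≤ max (|a₀|, 1 + M) ≤ N(A)`. -/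

section Norms

variable {n : ℕ} (A : Matrix (Fin n) (Fin n) ℂ)

theorem norm_add_norm_le_infNorm (i : Fin n) {j j' : Fin n} (h : j ≠ j') :
    ‖A i j‖ + ‖A i j'‖ ≤ infNorm A :=
  (Finset.add_le_sum (fun _ _ => norm_nonneg _) (Finset.mem_univ _) (Finset.mem_univ _) h).trans
    (le_ciSup (f := fun i => ∑ j, ‖A i j‖) (Finite.bddAbove_range _) i)

theorem norm_add_norm_le_oneNorm {i i' : Fin n} (j : Fin n) (h : i ≠ i') :
    ‖A i j‖ + ‖A i' j‖ ≤ oneNorm A :=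
  (Finset.add_le_sum (fun _ _ => norm_nonneg _) (Finset.mem_univ _) (Finset.mem_univ _) h).trans
    (le_ciSup (f := fun j => ∑ i, ‖A i j‖) (Finite.bddAbove_range _) j)

theorem norm_le_oneNorm (i j : Fin n) : ‖A i j‖ ≤ oneNorm A :=
  (Finset.single_le_sum (f := fun i => ‖A i j‖) (fun _ _ => norm_nonneg _)
    (Finset.mem_univ i)).trans (le_ciSup (f := fun j => ∑ i, ‖A i j‖) (Finite.bddAbove_range _) j)

end Norms

section Frob

variable {n : ℕ} (a : ℕ → ℂ)

theorem sum_norm_Frob_zero : ∑ i, ‖Frob (n + 1) a i 0‖ = ‖a 0‖ := by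
  simp [Fin.sum_univ_castSucc, Frob, fun i : Fin n => i.isLt.ne]

theorem sum_norm_Frob_succ (j : Fin n) : ∑ i, ‖Frob (n + 1) a i j.succ‖ = 1 + ‖a (j + 1)‖ := by
  simp [Fin.sum_univ_castSucc, Frob, fun i : Fin n => i.isLt.ne, Fin.val_inj, apply_ite norm]

theorem oneNorm_Frob_le {M : ℝ} (hM : ∀ j, 1 ≤ j → j ≤ n → ‖a j‖ ≤ M) :
    oneNorm (Frob (n + 1) a) ≤ max ‖a 0‖ (1 + M) := by
  refine ciSup_le fun j => ?_
  induction j using Fin.cases with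
  | zero => exact (sum_norm_Frob_zero a).trans_le (le_max_left _ _)
  | succ j =>
    rw [sum_norm_Frob_succ]
    exact le_max_of_le_right (by gcongr; exact hM _ (by omega) j.isLt)

end Frob

namespace IsTypeE

theorem two_le {n c : ℕ} {b : ℕ → ℂ} {E : Matrix (Fin n) (Fin n) ℂ} (hE : IsTypeE n c b E) :
    2 ≤ n := by
  obtain ⟨r, col, hrc, -, hcol, -⟩ := hE
  have := hrc 0 (Nat.zero_le _)
  have := (hcol 0 (Nat.zero_le _)).1
  have := (r 0).isLt
  omega

variable {n c : ℕ} {b : ℕ → ℂ} {E : Matrix (Fin (n + 2)) (Fin (n + 2)) ℂ}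

theorem apply_castSucc_of_lt (hE : IsTypeE (n + 2) c b E) {i : Fin (n + 1)} (hi : (i : ℕ) < c)
    (j : Fin (n + 2)) : E i.castSucc j = if j = i.succ then 1 else 0 := by
  obtain ⟨r, col, -, hcr, -, -, hsup, -, hzero⟩ := hE
  split_ifs with hj
  · exact hsup _ _ (by simp [hj])
  · have hi_last : (i.castSucc : ℕ) ≠ n + 2 - 1 := by rw [Fin.val_castSucc]; omega
    refine hzero _ _ (by simpa [Fin.ext_iff] using hj) (fun h => hi_last h.1)
      fun k hk ⟨hr, _⟩ => ?_
    have := hcr k hk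
    rw [hr, Fin.val_castSucc] at this
    omega

theorem apply_zero_of_ne_last (hE : IsTypeE (n + 2) c b E) {i : Fin (n + 2)}
    (hi : i ≠ Fin.last _) : E i 0 = 0 := by
  obtain ⟨r, col, -, -, hcol, -, -, -, hzero⟩ := hE
  refine hzero _ _ (by simp) (by simpa [Fin.ext_iff] using hi) fun k hk ⟨_, hc⟩ => ?_
  have := (hcol k hk).1
  simp [hc] at this

theorem apply_eq_zero_of_succ_lt (hE : IsTypeE (n + 2) c b E) {i j : Fin (n + 2)}
    (h : (i : ℕ) + 1 < j) : E i j = 0 := by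
  obtain ⟨r, col, hrc, -, -, -, -, -, hzero⟩ := hE
  refine hzero _ _ (by omega) (by omega) fun k hk ⟨hr, hc⟩ => ?_
  have := hrc k hk
  rw [hr, hc] at this
  omega

theorem apply_last_of_lt (hE : IsTypeE (n + 2) c b E) {j : Fin (n + 2)} (hj : c < j) :
    E (Fin.last _) j = 0 := by
  obtain ⟨r, col, -, -, hcol, -, -, -, hzero⟩ := hE
  refine hzero _ _ (by rw [Fin.val_last]; omega) (by rintro ⟨-, h⟩; omega)
    fun k hk ⟨_, hc⟩ => ?_
  have := (hcol k hk).2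
  rw [hc] at this
  omega

theorem apply_last_zero (hE : IsTypeE (n + 2) c b E) : E (Fin.last _) 0 = -b 0 := by
  obtain ⟨r, col, -, -, -, -, -, hcorner, -⟩ := hE
  exact hcorner _ _ (by simp) rfl

theorem apply_last_one (hE : IsTypeE (n + 2) c b E) : E (Fin.last _) 1 = -b 1 := by
  obtain ⟨r, col, hrc, -, hcol, hval, -⟩ := hE
  have hr := hrc n (by omega)
  have hc := (hcol n (by omega)).1
  have := (r n).isLt
  have hpos : r n = Fin.last _ ∧ col n = 1 := ⟨Fin.ext (by rw [Fin.val_last]; omega), Fin.ext (by rw [Fin.val_one]; omega)⟩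
  simpa [hpos, show n + 2 - 1 - n = 1 by omega] using hval n (by omega)

-- Rotating the columns by one makes `E` lower triangular with diagonal `1, …, 1, -b 0`.
theorem isUnit_det (hE : IsTypeE (n + 2) c b E) (hb : b 0 ≠ 0) : IsUnit E.det := by
  set E' := E.submatrix id (finRotate (n + 2))
  have hlower : E'.IsLowerTriangular := by
    intro i j (hij : i < j)
    induction j using Fin.lastCases with
    | last => simpa [E', Fin.last_add_one] using hE.apply_zero_of_ne_last hij.ne
    | cast j =>
      simp only [E', Matrix.submatrix_apply, id_eq, finRotate_apply, Fin.coeSucc_eq_succ]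
      exact hE.apply_eq_zero_of_succ_lt (by simpa [Fin.lt_def] using hij)
  have hdiag : E'.det = -b 0 := by
    have hlast := hE.apply_last_zero
    obtain ⟨-, -, -, -, -, -, hsup, -⟩ := hE
    rw [Matrix.det_of_isLowerTriangular _ hlower, Fin.prod_univ_castSucc]
    simp [E', finRotate_apply, Fin.coeSucc_eq_succ, Fin.last_add_one, hlast,
      fun i : Fin (n + 1) => hsup i.castSucc i.succ (by simp)]
  refine isUnit_iff_ne_zero.mpr fun h => ?_
  rw [Matrix.det_permute', h, mul_zero] at hdiag
  exact hb (neg_eq_zero.mp hdiag.symm)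

theorem inv_apply_succ (hE : IsTypeE (n + 2) c b E) (hb : b 0 ≠ 0) {i : Fin (n + 1)}
    (hi : (i : ℕ) < c) (t : Fin (n + 2)) : E⁻¹ i.succ t = (1 : Matrix _ _ ℂ) i.castSucc t := by
  rw [← E.mul_nonsing_inv (hE.isUnit_det hb), Matrix.mul_apply]
  simp [hE.apply_castSucc_of_lt hi]

theorem inv_apply_one_zero (hE : IsTypeE (n + 2) c b E) (hb : b 0 ≠ 0) (hc : 1 ≤ c) :
    E⁻¹ 1 0 = 1 := by
  have h := hE.inv_apply_succ hb (i := 0) hc 0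
  rwa [Fin.succ_zero_eq_one, Fin.castSucc_zero, Matrix.one_apply_eq] at h

theorem inv_apply_zero_last (hE : IsTypeE (n + 2) c b E) (hb : b 0 ≠ 0) :
    E⁻¹ 0 (Fin.last _) = -(b 0)⁻¹ := by
  have h := congrFun (congrFun (E.nonsing_inv_mul (hE.isUnit_det hb)) 0) 0
  rw [Matrix.mul_apply, Finset.sum_eq_single (Fin.last _)
    (fun s _ hs => by rw [hE.apply_zero_of_ne_last hs, mul_zero]) (by simp),
    hE.apply_last_zero, Matrix.one_apply_eq] at h
  field_simp
  linear_combination -h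

theorem inv_apply_zero_zero (hE : IsTypeE (n + 2) c b E) (hb : b 0 ≠ 0) (hc : 1 ≤ c) :
    E⁻¹ 0 0 = -(b 1 / b 0) := by
  have h := congrFun (congrFun (E.mul_nonsing_inv (hE.isUnit_det hb)) (Fin.last _)) 0
  have htail : ∑ s : Fin (n + 1), E (Fin.last _) s.succ * E⁻¹ s.succ 0 = -b 1 := by
    rw [Finset.sum_eq_single 0 ?_ (by simp)]
    · simp [hE.apply_last_one, hE.inv_apply_one_zero hb hc]
    intro s _ hs
    by_cases hsc : (s : ℕ) < c
    · rw [hE.inv_apply_succ hb hsc, Matrix.one_apply_ne (by simpa using hs), mul_zero]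
    · rw [hE.apply_last_of_lt (by rw [Fin.val_succ]; omega), zero_mul]
  rw [Matrix.mul_apply, Fin.sum_univ_succ, htail, hE.apply_last_zero,
    Matrix.one_apply_ne (by simp [Fin.ext_iff])] at h
  field_simp
  linear_combination -h

end IsTypeE

theorem stmt13_general (n c : ℕ) (hc1 : 1 ≤ c)
    (a : ℕ → ℂ) (M : ℝ)
    (hM : IsGreatest ((fun k => ‖a k‖) '' (Set.Icc 1 (n - 1))) M)
    (ha0 : 1 < ‖a 0‖) (han : ‖a (n - 1)‖ = M)
    (A : Matrix (Fin n) (Fin n) ℂ) (hA : IsTypeEInv n c a A) :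
    NN (Frob n a) ≤ NN A := by
  obtain ⟨E, hE, rfl⟩ := hA
  obtain ⟨m, rfl⟩ : ∃ m, n = m + 2 := ⟨n - 2, by have := hE.two_le; omega⟩
  have ha : a 0 ≠ 0 := norm_pos_iff.mp (one_pos.trans ha0)
  have hb : asharp (m + 2) a 0 ≠ 0 := by simp [asharp, ha]
  have h00 : ‖E⁻¹ 0 0‖ = M := by
    rw [hE.inv_apply_zero_zero hb hc1, ← han]
    simp [asharp, ha]
  have h0l : ‖E⁻¹ 0 (Fin.last _)‖ = ‖a 0‖ := by simp [hE.inv_apply_zero_last hb, asharp]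
  have h10 : ‖E⁻¹ 1 0‖ = 1 := by simp [hE.inv_apply_one_zero hb hc1]
  have hrow : ‖a 0‖ + M ≤ infNorm E⁻¹ := by
    simpa [h00, h0l, add_comm] using
      norm_add_norm_le_infNorm E⁻¹ 0 (Fin.last_pos' (n := m + 1)).ne
  have hcol₀ : 1 + M ≤ oneNorm E⁻¹ := by
    simpa [h00, h10, add_comm] using norm_add_norm_le_oneNorm E⁻¹ 0 (zero_ne_one' (Fin (m + 2)))
  have hcol_last : ‖a 0‖ ≤ oneNorm E⁻¹ := h0l ▸ norm_le_oneNorm E⁻¹ 0 (Fin.last _)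
  have hM0 : 0 ≤ M := han ▸ norm_nonneg _
  calc NN (Frob (m + 2) a) ≤ oneNorm (Frob (m + 2) a) := min_le_right _ _
    _ ≤ max ‖a 0‖ (1 + M) := oneNorm_Frob_le a fun j h1 h2 => hM.2 ⟨j, ⟨h1, by omega⟩, rfl⟩
    _ ≤ NN E⁻¹ := le_min (max_le (by linarith) (by linarith)) (max_le hcol_last hcol₀)

/-- if `n ≥ 3`, `1 ≤ c ≤ n-2`, `|a_0| > 1`, `|a_{n-1}| = M` and `A`
is of type `E_c(p♯)⁻¹`, then `N(F) ≤ N(A)`. -/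
theorem stmt13 (n c : ℕ) (hn : 3 ≤ n) (hc1 : 1 ≤ c) (hc2 : c ≤ n - 2)
    (a : ℕ → ℂ) (ha : a 0 ≠ 0) (M : ℝ)
    (hM : IsGreatest ((fun k => ‖a k‖) '' (Set.Icc 1 (n - 1))) M)
    (ha0 : 1 < ‖a 0‖) (han : ‖a (n - 1)‖ = M)
    (A : Matrix (Fin n) (Fin n) ℂ) (hA : IsTypeEInv n c a A) :
    NN (Frob n a) ≤ NN A :=
  stmt13_general n c hc1 a M hM ha0 han A hA

end
end

section
/- Suppose |a_0| > 1 and let F be the Frobenius companion matrix of p. If N(F) < ‖W‖_∞, then ‖W‖_∞ < 2·N(F). -/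
noncomputable section

/-! Since `|a_0| > 1`, the last row and the columns of `F` give `N(F) ≥ |a_0| > 1` and
`N(F) ≥ 1 + |a_j|` for `1 ≤ j ≤ n - 1`. The rows of `W` have sums `|a_{n-1}| + |a_0|`, `1` and
`1 + |a_{i-1}|/|a_0| ≤ 1 + |a_{i-1}|`, each of which is therefore below `2·N(F)`. -/

section MatrixNorms

variable {n : ℕ} (A : Matrix (Fin n) (Fin n) ℂ)

theorem sum_norm_le_infNorm (i : Fin n) : ∑ j, ‖A i j‖ ≤ infNorm A :=
  le_ciSup (f := fun i => ∑ j, ‖A i j‖) (Set.finite_range _).bddAbove i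

theorem sum_norm_le_oneNorm (j : Fin n) : ∑ i, ‖A i j‖ ≤ oneNorm A :=
  le_ciSup (f := fun j => ∑ i, ‖A i j‖) (Set.finite_range _).bddAbove j

theorem infNorm_lt_of_forall_sum_norm_lt [NeZero n] {c : ℝ}
    (h : ∀ i, ∑ j, ‖A i j‖ < c) : infNorm A < c := by
  obtain ⟨i, hi⟩ := exists_eq_ciSup_of_finite (f := fun i => ∑ j, ‖A i j‖)
  rw [infNorm, ← hi]
  exact h i

end MatrixNorms

section Frobenius

variable {n : ℕ} (a : ℕ → ℂ)

theorem Frob_apply_of_succ_eq {i j : Fin n} (h : (j : ℕ) = i + 1) : Frob n a i j = 1 := by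
  simp [Frob, h]

theorem Frob_apply_of_eq_last {i : Fin n} (hi : (i : ℕ) = n - 1) (j : Fin n) :
    Frob n a i j = -a j := by
  simp only [Frob, Matrix.of_apply]
  rw [if_neg (by omega), if_pos hi]

theorem sum_norm_coeff_le_infNorm_Frob [NeZero n] :
    ∑ j : Fin n, ‖a j‖ ≤ infNorm (Frob n a) := by
  let last : Fin n := ⟨n - 1, Nat.sub_one_lt (NeZero.ne n)⟩
  simpa [Frob_apply_of_eq_last a (i := last) rfl] using sum_norm_le_infNorm (Frob n a) last

theorem norm_coeff_zero_le_oneNorm_Frob [NeZero n] : ‖a 0‖ ≤ oneNorm (Frob n a) := by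
  let last : Fin n := ⟨n - 1, Nat.sub_one_lt (NeZero.ne n)⟩
  calc ‖a 0‖ = ‖Frob n a last 0‖ := by simp [Frob_apply_of_eq_last a (i := last) rfl]
    _ ≤ ∑ i, ‖Frob n a i 0‖ :=
        Finset.single_le_sum (f := fun i => ‖Frob n a i 0‖) (fun _ _ => norm_nonneg _)
          (Finset.mem_univ _)
    _ ≤ oneNorm (Frob n a) := sum_norm_le_oneNorm _ _

theorem one_add_norm_coeff_le_oneNorm_Frob {j : ℕ} (hj : 1 ≤ j) (hjn : j < n) :
    1 + ‖a j‖ ≤ oneNorm (Frob n a) := by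
  let prev : Fin n := ⟨j - 1, by omega⟩
  let last : Fin n := ⟨n - 1, by omega⟩
  have hne : prev ≠ last := Fin.ne_of_val_ne (show j - 1 ≠ n - 1 by omega)
  calc 1 + ‖a j‖ = ‖Frob n a prev ⟨j, hjn⟩‖ + ‖Frob n a last ⟨j, hjn⟩‖ := by
        rw [Frob_apply_of_succ_eq a (show j = j - 1 + 1 by omega), Frob_apply_of_eq_last a rfl]
        simp
    _ ≤ ∑ i, ‖Frob n a i ⟨j, hjn⟩‖ :=
        Finset.add_le_sum (f := fun i => ‖Frob n a i ⟨j, hjn⟩‖) (fun _ _ => norm_nonneg _)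
          (Finset.mem_univ _) (Finset.mem_univ _) hne
    _ ≤ oneNorm (Frob n a) := sum_norm_le_oneNorm _ _

theorem norm_coeff_zero_le_NN_Frob [NeZero n] : ‖a 0‖ ≤ NN (Frob n a) := by
  refine le_min ?_ (norm_coeff_zero_le_oneNorm_Frob a)
  have h0 : ‖a 0‖ ≤ ∑ j : Fin n, ‖a j‖ :=
    Finset.single_le_sum (f := fun j : Fin n => ‖a j‖) (fun _ _ => norm_nonneg _)
      (Finset.mem_univ 0)
  exact h0.trans (sum_norm_coeff_le_infNorm_Frob a)

theorem one_add_norm_coeff_le_NN_Frob (ha0 : 1 ≤ ‖a 0‖) {j : ℕ} (hj : 1 ≤ j)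
    (hjn : j < n) : 1 + ‖a j‖ ≤ NN (Frob n a) := by
  refine le_min ?_ (one_add_norm_coeff_le_oneNorm_Frob a hj hjn)
  have : NeZero n := ⟨by omega⟩
  have hne : (0 : Fin n) ≠ ⟨j, hjn⟩ := Fin.ne_of_val_ne (show 0 ≠ j by omega)
  have hpair : ‖a 0‖ + ‖a j‖ ≤ ∑ k : Fin n, ‖a k‖ :=
    Finset.add_le_sum (f := fun k : Fin n => ‖a k‖) (fun _ _ => norm_nonneg _)
      (Finset.mem_univ _) (Finset.mem_univ _) hne
  linarith [sum_norm_coeff_le_infNorm_Frob (n := n) a]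

end Frobenius

section WMatrix

variable {n : ℕ} (a : ℕ → ℂ)

theorem sum_norm_Wmat_row_zero (hn : 2 ≤ n) {i : Fin n} (hi : (i : ℕ) = 0) :
    ∑ j, ‖Wmat n a i j‖ = ‖a (n - 1)‖ + ‖a 0‖ := by
  rw [Fintype.sum_eq_add ⟨0, by omega⟩ ⟨n - 1, by omega⟩
    (Fin.ne_of_val_ne (show 0 ≠ n - 1 by omega))]
  · simp [Wmat, hi, show n - 1 ≠ 0 by omega]
  · rintro j ⟨hj0, hjl⟩
    have hj0' : (j : ℕ) ≠ 0 := Fin.val_ne_of_ne hj0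
    have hjl' : (j : ℕ) ≠ n - 1 := Fin.val_ne_of_ne hjl
    simp [Wmat, hi, hj0', hjl']

theorem sum_norm_Wmat_row_one {i : Fin n} (hi : (i : ℕ) = 1) : ∑ j, ‖Wmat n a i j‖ = 1 := by
  rw [Fintype.sum_eq_single ⟨0, by omega⟩]
  · simp [Wmat, hi]
  · intro j hj
    have hj' : (j : ℕ) ≠ 0 := Fin.val_ne_of_ne hj
    simp [Wmat, hi, hj']

theorem sum_norm_Wmat_row_of_two_le {i : Fin n} (hi : 2 ≤ (i : ℕ)) :
    ∑ j, ‖Wmat n a i j‖ = 1 + ‖a (i - 1)‖ / ‖a 0‖ := by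
  rw [Fintype.sum_eq_add ⟨i - 1, by omega⟩ ⟨0, by omega⟩
    (Fin.ne_of_val_ne (show (i : ℕ) - 1 ≠ 0 by omega))]
  · simp [Wmat, hi, show (i : ℕ) ≠ 0 by omega, show (i : ℕ) ≠ 1 by omega,
      show (i : ℕ) - 1 + 1 = i by omega]
  · rintro j ⟨hj0, hjl⟩
    have hj0' : (j : ℕ) ≠ i - 1 := Fin.val_ne_of_ne hj0
    have hjl' : (j : ℕ) ≠ 0 := Fin.val_ne_of_ne hjl
    simp [Wmat, hjl', show (i : ℕ) ≠ 0 by omega, show (i : ℕ) ≠ j + 1 by omega]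

end WMatrix

theorem stmt16_general (n : ℕ) (hn : 2 ≤ n) (a : ℕ → ℂ)
    (ha0 : 1 < ‖a 0‖) :
    infNorm (Wmat n a) < 2 * NN (Frob n a) := by
  have : NeZero n := ⟨by omega⟩
  have hN0 := norm_coeff_zero_le_NN_Frob (n := n) a
  refine infNorm_lt_of_forall_sum_norm_lt _ fun i => ?_
  obtain hi | hi | hi : (i : ℕ) = 0 ∨ (i : ℕ) = 1 ∨ 2 ≤ (i : ℕ) := by omega
  · have hlast :=
      one_add_norm_coeff_le_NN_Frob (n := n) a ha0.le (j := n - 1) (by omega) (by omega)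
    rw [sum_norm_Wmat_row_zero a hn hi]
    linarith
  · rw [sum_norm_Wmat_row_one a hi]
    linarith
  · have hprev :=
      one_add_norm_coeff_le_NN_Frob (n := n) a ha0.le (j := i - 1) (by omega) (by omega)
    have hdiv := div_le_self (norm_nonneg (a (i - 1))) ha0.le
    rw [sum_norm_Wmat_row_of_two_le a hi]
    linarith

/-- if `|a_0| > 1` and `N(F) < ‖W‖_∞`, then `‖W‖_∞ < 2·N(F)`. -/
theorem stmt16 (n : ℕ) (hn : 2 ≤ n) (a : ℕ → ℂ) (ha : a 0 ≠ 0)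
    (ha0 : 1 < ‖a 0‖)
    (hlt : NN (Frob n a) < infNorm (Wmat n a)) :
    infNorm (Wmat n a) < 2 * NN (Frob n a) :=
  stmt16_general n hn a ha0
end
end
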